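/- arXiv:1701.02124 — 3 statements merged into one kernel-verified Lean document; each statement's English description precedes it below -/
import Mathlib

section
/- Let Ω ⊂ ℝ³ be a bounded measurable set and N ≥ 1. The Hartree potential, viewed as the map Ψ ↦ V_H(ρ(Ψ)), is sequentially continuous from L²(Ω; ℂᴺ) to L²(Ω; ℝ): if Ψₙ → Ψ in L²(Ω; ℂᴺ), then V_H(ρ(Ψₙ)) → V_H(ρ(Ψ)) in L²(Ω; ℝ). -/
/-!
The density map `Ψ ↦ ‖Ψ‖²` is locally Lipschitz from `L²` to `L¹`, because
`|‖a‖² - ‖b‖²| ≤ ‖a - b‖ (‖a‖ + ‖b‖)` and Hölder. The Coulomb operator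
`f ↦ ∫_Ω f(y) / ‖x - y‖ dy` is bounded from `L¹(Ω)` to `L²(Ω)`: Cauchy–Schwarz in `y` and
Tonelli bound its norm by `sup_y ‖x ↦ 1 / ‖x - y‖‖_{L²(Ω)}`, which is finite since `1 / ‖z‖²` is
integrable on the unit ball of `ℝ³`, is at most `1` outside it, and `Ω` has finite volume.
-/

open MeasureTheory Filter

open scoped ENNReal

section KernelOperator

variable {α β : Type*} [MeasurableSpace α] [MeasurableSpace β] {μ : Measure α} {ν : Measure β}

theorem lintegral_mul_sq_le {g k : β → ℝ≥0∞} (hg : AEMeasurable g ν) (hk : AEMeasurable k ν) :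
    (∫⁻ y, g y * k y ∂ν) ^ 2 ≤ (∫⁻ y, g y ∂ν) * ∫⁻ y, g y * k y ^ 2 ∂ν := by
  have hsqrt : ∀ a : ℝ≥0∞, (a ^ (2⁻¹ : ℝ)) ^ 2 = a := ENNReal.rpow_inv_natCast_pow two_ne_zero
  -- Cauchy–Schwarz after writing `g * k = √g * √(g * k ^ 2)`
  have hsplit : ∀ y, g y ^ (2⁻¹ : ℝ) * (g y * k y ^ 2) ^ (2⁻¹ : ℝ) = g y * k y := fun y => by
    rw [ENNReal.mul_rpow_of_nonneg _ _ (by norm_num), ← mul_assoc, ← ENNReal.rpow_natCast,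
      ← ENNReal.rpow_mul, ← ENNReal.rpow_add_of_nonneg _ _ (by norm_num) (by norm_num)]
    norm_num
  calc (∫⁻ y, g y * k y ∂ν) ^ 2
      = (∫⁻ y, g y ^ (2⁻¹ : ℝ) * (g y * k y ^ 2) ^ (2⁻¹ : ℝ) ∂ν) ^ 2 := by simp only [hsplit]
    _ ≤ ((∫⁻ y, g y ∂ν) ^ (2⁻¹ : ℝ) * (∫⁻ y, g y * k y ^ 2 ∂ν) ^ (2⁻¹ : ℝ)) ^ 2 := by
      gcongr
      exact ENNReal.lintegral_mul_norm_pow_le hg (hg.mul (hk.pow_const 2))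
        (by norm_num) (by norm_num) (by norm_num)
    _ = (∫⁻ y, g y ∂ν) * ∫⁻ y, g y * k y ^ 2 ∂ν := by rw [mul_pow, hsqrt, hsqrt]

theorem eLpNorm_two_le_of_lintegral_sq_le {ε : Type*} [ENorm ε] {f : α → ε} {A : ℝ≥0∞}
    (h : ∫⁻ x, ‖f x‖ₑ ^ 2 ∂μ ≤ A ^ 2) : eLpNorm f 2 μ ≤ A := by
  rw [← ENNReal.pow_le_pow_left_iff two_ne_zero]
  have := eLpNorm_nnreal_pow_eq_lintegral (f := f) (μ := μ) (p := 2) two_ne_zero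
  simp only [NNReal.coe_ofNat, ENNReal.rpow_two, ENNReal.coe_ofNat] at this
  rwa [this]

variable [SFinite μ] [SFinite ν] {K : α → β → ℝ} {C : ℝ≥0∞}

theorem lintegral_sq_lintegral_mul_kernel_le (hK : Measurable (Function.uncurry K))
    (hKC : ∀ y, ∫⁻ x, ‖K x y‖ₑ ^ 2 ∂μ ≤ C ^ 2) {g : β → ℝ≥0∞} (hg : AEMeasurable g ν) :
    ∫⁻ x, (∫⁻ y, g y * ‖K x y‖ₑ ∂ν) ^ 2 ∂μ ≤ ((∫⁻ y, g y ∂ν) * C) ^ 2 := by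
  have hgK : AEMeasurable (Function.uncurry fun x y => g y * ‖K x y‖ₑ ^ 2) (μ.prod ν) :=
    hg.comp_snd.mul (hK.enorm.pow_const 2).aemeasurable
  calc ∫⁻ x, (∫⁻ y, g y * ‖K x y‖ₑ ∂ν) ^ 2 ∂μ
      ≤ ∫⁻ x, (∫⁻ y, g y ∂ν) * ∫⁻ y, g y * ‖K x y‖ₑ ^ 2 ∂ν ∂μ :=
        lintegral_mono fun x => lintegral_mul_sq_le hg
          (hK.comp measurable_prodMk_left).enorm.aemeasurable
    _ = (∫⁻ y, g y ∂ν) * ∫⁻ y, g y * ∫⁻ x, ‖K x y‖ₑ ^ 2 ∂μ ∂ν := by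
      rw [lintegral_const_mul'' _ hgK.lintegral_prod_right, lintegral_lintegral_swap hgK]
      congr 1
      refine lintegral_congr fun y => lintegral_const_mul _ ?_
      exact ((hK.comp measurable_prodMk_right).enorm.pow_const 2)
    _ ≤ (∫⁻ y, g y ∂ν) * ∫⁻ y, g y * C ^ 2 ∂ν := by gcongr with y; exact hKC y
    _ = ((∫⁻ y, g y ∂ν) * C) ^ 2 := by rw [lintegral_mul_const'' _ hg]; ring

theorem ae_integrable_mul_kernel (hK : Measurable (Function.uncurry K))
    (hKC : ∀ y, ∫⁻ x, ‖K x y‖ₑ ^ 2 ∂μ ≤ C ^ 2) (hC : C ≠ ∞) {f : β → ℝ} (hf : Integrable f ν) :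
    ∀ᵐ x ∂μ, Integrable (fun y => f y * K x y) ν := by
  have hfK : AEMeasurable (Function.uncurry fun x y => ‖f y‖ₑ * ‖K x y‖ₑ) (μ.prod ν) :=
    hf.1.enorm.comp_snd.mul hK.enorm.aemeasurable
  have hfin : ∫⁻ x, (∫⁻ y, ‖f y‖ₑ * ‖K x y‖ₑ ∂ν) ^ 2 ∂μ ≠ ∞ :=
    ((lintegral_sq_lintegral_mul_kernel_le hK hKC hf.1.enorm).trans_lt
      (by finiteness [hf.2])).ne
  filter_upwards [ae_lt_top' (hfK.lintegral_prod_right.pow_const 2) hfin] with x hx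
  refine ⟨hf.1.mul (hK.comp measurable_prodMk_left).aestronglyMeasurable, ?_⟩
  simpa [HasFiniteIntegral, enorm_mul] using hx

theorem eLpNorm_integral_mul_kernel_le (hK : Measurable (Function.uncurry K))
    (hKC : ∀ y, ∫⁻ x, ‖K x y‖ₑ ^ 2 ∂μ ≤ C ^ 2) {f : β → ℝ} (hf : AEStronglyMeasurable f ν) :
    eLpNorm (fun x => ∫ y, f y * K x y ∂ν) 2 μ ≤ C * eLpNorm f 1 ν := by
  refine eLpNorm_two_le_of_lintegral_sq_le ?_
  calc ∫⁻ x, ‖∫ y, f y * K x y ∂ν‖ₑ ^ 2 ∂μ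
      ≤ ∫⁻ x, (∫⁻ y, ‖f y‖ₑ * ‖K x y‖ₑ ∂ν) ^ 2 ∂μ := by
        gcongr with x
        simpa only [enorm_mul] using enorm_integral_le_lintegral_enorm (fun y => f y * K x y)
    _ ≤ ((∫⁻ y, ‖f y‖ₑ ∂ν) * C) ^ 2 := lintegral_sq_lintegral_mul_kernel_le hK hKC hf.enorm
    _ = (C * eLpNorm f 1 ν) ^ 2 := by rw [eLpNorm_one_eq_lintegral_enorm, mul_comm]

theorem eLpNorm_integral_mul_kernel_sub_le (hK : Measurable (Function.uncurry K))
    (hKC : ∀ y, ∫⁻ x, ‖K x y‖ₑ ^ 2 ∂μ ≤ C ^ 2) (hC : C ≠ ∞) {f g : β → ℝ}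
    (hf : Integrable f ν) (hg : Integrable g ν) :
    eLpNorm (fun x => ∫ y, f y * K x y ∂ν - ∫ y, g y * K x y ∂ν) 2 μ
      ≤ C * eLpNorm (fun y => f y - g y) 1 ν := by
  have hlin : (fun x => ∫ y, f y * K x y ∂ν - ∫ y, g y * K x y ∂ν)
      =ᵐ[μ] fun x => ∫ y, (f y - g y) * K x y ∂ν := by
    filter_upwards [ae_integrable_mul_kernel hK hKC hC hf,
      ae_integrable_mul_kernel hK hKC hC hg] with x hfx hgx
    simp only [← integral_sub hfx hgx, sub_mul]
  rw [eLpNorm_congr_ae hlin]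
  exact eLpNorm_integral_mul_kernel_le hK hKC (hf.1.sub hg.1)

end KernelOperator

section Coulomb

open Metric

variable {E : Type*} [NormedAddCommGroup E]

theorem enorm_inv_norm_sq_le_one_add_indicator (z : E) :
    ‖‖z‖⁻¹‖ₑ ^ 2 ≤ 1 + (ball (0 : E) 1).indicator (fun w => ‖‖w‖⁻¹‖ₑ ^ 2) z := by
  by_cases hz : z ∈ ball (0 : E) 1
  · simp only [Set.indicator_of_mem hz, le_add_self]
  · rw [mem_ball_zero_iff, not_lt] at hz
    rw [Set.indicator_of_notMem (by simpa using hz), add_zero]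
    refine pow_le_one₀ zero_le ?_
    rw [Real.enorm_eq_ofReal (by positivity)]
    exact ENNReal.ofReal_le_one.2 (inv_le_one_of_one_le₀ hz)

variable [MeasurableSpace E] [BorelSpace E]

theorem setLIntegral_enorm_inv_norm_sub_sq_le {μ : Measure E} [μ.IsAddRightInvariant]
    (s : Set E) (y : E) :
    ∫⁻ x in s, ‖‖x - y‖⁻¹‖ₑ ^ 2 ∂μ ≤ μ s + ∫⁻ z in ball 0 1, ‖‖z‖⁻¹‖ₑ ^ 2 ∂μ := by
  set F : E → ℝ≥0∞ := (ball (0 : E) 1).indicator fun w => ‖‖w‖⁻¹‖ₑ ^ 2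
  calc ∫⁻ x in s, ‖‖x - y‖⁻¹‖ₑ ^ 2 ∂μ
      ≤ ∫⁻ x in s, 1 + F (x - y) ∂μ :=
        lintegral_mono fun x => enorm_inv_norm_sq_le_one_add_indicator (x - y)
    _ ≤ μ s + ∫⁻ x, F (x - y) ∂μ := by
      rw [lintegral_add_left measurable_const, setLIntegral_one]
      exact add_le_add_right (setLIntegral_le_lintegral s _) _
    _ = μ s + ∫⁻ z in ball 0 1, ‖‖z‖⁻¹‖ₑ ^ 2 ∂μ := by
      rw [lintegral_sub_right_eq_self F y, lintegral_indicator measurableSet_ball]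

theorem setLIntegral_ball_enorm_inv_norm_sq_lt_top [NormedSpace ℝ E] [FiniteDimensional ℝ E]
    {μ : Measure E} [μ.IsAddHaarMeasure] (hE : 2 < Module.finrank ℝ E) :
    ∫⁻ z in ball 0 1, ‖‖z‖⁻¹‖ₑ ^ 2 ∂μ < ∞ := by
  have hint : IntegrableOn (fun z : E => ‖z‖⁻¹ ^ 2) (ball 0 1) μ := by
    refine integrableOn_ball_of_norm_le_rpow (C := 1) (α := 2) (by omega) (by exact_mod_cast hE)
      (.of_forall fun z => ?_) (by fun_prop)
    rw [Real.rpow_neg (norm_nonneg z), one_mul, norm_pow, norm_inv, norm_norm, inv_pow,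
      Real.rpow_two]
  simpa only [HasFiniteIntegral, enorm_pow] using hint.2

theorem exists_setLIntegral_enorm_inv_norm_sub_sq_le [NormedSpace ℝ E] [FiniteDimensional ℝ E]
    {μ : Measure E} [μ.IsAddHaarMeasure] (hE : 2 < Module.finrank ℝ E) {s : Set E}
    (hs : μ s ≠ ∞) : ∃ C ≠ ∞, ∀ y, ∫⁻ x in s, ‖‖x - y‖⁻¹‖ₑ ^ 2 ∂μ ≤ C ^ 2 := by
  have hball := setLIntegral_ball_enorm_inv_norm_sq_lt_top (μ := μ) hE
  refine ⟨(μ s + ∫⁻ z in ball 0 1, ‖‖z‖⁻¹‖ₑ ^ 2 ∂μ) ^ ((2 : ℕ)⁻¹ : ℝ), by finiteness,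
    fun y => ?_⟩
  rw [ENNReal.rpow_inv_natCast_pow two_ne_zero]
  exact setLIntegral_enorm_inv_norm_sub_sq_le s y

end Coulomb

section Density

variable {α E : Type*} [MeasurableSpace α] {μ : Measure α} [NormedAddCommGroup E]

theorem eLpNorm_norm_sq_sub_norm_sq_le {f g : α → E} (hf : AEStronglyMeasurable f μ)
    (hg : AEStronglyMeasurable g μ) :
    eLpNorm (fun x => ‖f x‖ ^ 2 - ‖g x‖ ^ 2) 1 μ
      ≤ eLpNorm (f - g) 2 μ * (eLpNorm f 2 μ + eLpNorm g 2 μ) := by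
  have hpt : ∀ x, ‖‖f x‖ ^ 2 - ‖g x‖ ^ 2‖ ≤ ‖(f - g) x‖ * (‖f x‖ + ‖g x‖) := fun x => by
    rw [Real.norm_eq_abs, sq_sub_sq, abs_mul, abs_of_nonneg (by positivity), mul_comm]
    gcongr
    simpa only [Pi.sub_apply] using abs_norm_sub_norm_le (f x) (g x)
  calc eLpNorm (fun x => ‖f x‖ ^ 2 - ‖g x‖ ^ 2) 1 μ
      ≤ eLpNorm (fun x => ‖(f - g) x‖ * (‖f x‖ + ‖g x‖)) 1 μ := eLpNorm_mono_real hpt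
    _ ≤ 1 * eLpNorm (f - g) 2 μ * eLpNorm (fun x => ‖f x‖ + ‖g x‖) 2 μ :=
      eLpNorm_le_eLpNorm_mul_eLpNorm'_of_norm (hf.sub hg) (hf.norm.add hg.norm)
        (fun v s => ‖v‖ * s) 1 (.of_forall fun x => by simp)
    _ ≤ eLpNorm (f - g) 2 μ * (eLpNorm f 2 μ + eLpNorm g 2 μ) := by
      rw [one_mul]
      gcongr
      exact (eLpNorm_add_le hf.norm hg.norm one_le_two).trans_eq
        (by rw [eLpNorm_norm, eLpNorm_norm])

theorem tendsto_eLpNorm_norm_sq_sub_norm_sq {ι : Type*} {l : Filter ι} {F : ι → α → E}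
    {f : α → E} (hF : ∀ i, AEStronglyMeasurable (F i) μ) (hf : MemLp f 2 μ)
    (h : Tendsto (fun i => eLpNorm (F i - f) 2 μ) l (nhds 0)) :
    Tendsto (fun i => eLpNorm (fun x => ‖F i x‖ ^ 2 - ‖f x‖ ^ 2) 1 μ) l (nhds 0) := by
  set ε := fun i => eLpNorm (F i - f) 2 μ
  have hbound : ∀ i, eLpNorm (fun x => ‖F i x‖ ^ 2 - ‖f x‖ ^ 2) 1 μ
      ≤ ε i * (ε i + 2 * eLpNorm f 2 μ) := fun i => by
    have hFi : eLpNorm (F i) 2 μ ≤ ε i + eLpNorm f 2 μ := by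
      simpa using eLpNorm_add_le ((hF i).sub hf.1) hf.1 one_le_two
    calc _ ≤ ε i * (eLpNorm (F i) 2 μ + eLpNorm f 2 μ) :=
          eLpNorm_norm_sq_sub_norm_sq_le (hF i) hf.1
      _ ≤ ε i * (ε i + eLpNorm f 2 μ + eLpNorm f 2 μ) := by gcongr
      _ = ε i * (ε i + 2 * eLpNorm f 2 μ) := by ring
  have hlim : Tendsto (fun i => ε i * (ε i + 2 * eLpNorm f 2 μ)) l (nhds 0) := by
    simpa using ENNReal.Tendsto.mul h (Or.inr (by finiteness [hf.2])) (h.add_const _)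
      (Or.inr ENNReal.zero_ne_top)
  exact tendsto_of_tendsto_of_tendsto_of_le_of_le tendsto_const_nhds hlim (fun _ => zero_le)
    hbound

end Density

theorem hartree_continuous_L2_to_L2_general
    (Ω : Set (EuclideanSpace ℝ (Fin 3)))
    (hΩb : Bornology.IsBounded Ω)
    (N : ℕ)
    (Ψ : ℕ → EuclideanSpace ℝ (Fin 3) → EuclideanSpace ℂ (Fin N))
    (Ψlim : EuclideanSpace ℝ (Fin 3) → EuclideanSpace ℂ (Fin N))
    (hΨ : ∀ m, MemLp (Ψ m) 2 (volume.restrict Ω))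
    (hΨlim : MemLp Ψlim 2 (volume.restrict Ω))
    (hconv : Tendsto (fun m => eLpNorm (Ψ m - Ψlim) 2 (volume.restrict Ω)) atTop (nhds 0)) :
    Tendsto
      (fun m => eLpNorm
        (fun x => (∫ y in Ω, (∑ j, ‖Ψ m y j‖ ^ 2) / ‖x - y‖ ∂volume)
                    - ∫ y in Ω, (∑ j, ‖Ψlim y j‖ ^ 2) / ‖x - y‖ ∂volume)
        2 (volume.restrict Ω))
      atTop (nhds 0) := by
  obtain ⟨C, hC, hKC⟩ := exists_setLIntegral_enorm_inv_norm_sub_sq_le (μ := volume)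
    (by simp) hΩb.measure_lt_top.ne
  have hK : Measurable (Function.uncurry fun x y : EuclideanSpace ℝ (Fin 3) => ‖x - y‖⁻¹) := by
    fun_prop
  have hdensity : ∀ Φ : EuclideanSpace ℝ (Fin 3) → EuclideanSpace ℂ (Fin N),
      MemLp Φ 2 (volume.restrict Ω) → Integrable (fun y => ‖Φ y‖ ^ 2) (volume.restrict Ω) :=
    fun Φ hΦ => (memLp_two_iff_integrable_sq_norm hΦ.1).1 hΦ
  simp only [← EuclideanSpace.norm_sq_eq, div_eq_mul_inv]
  have hbound : ∀ m, eLpNorm (fun x => (∫ y in Ω, ‖Ψ m y‖ ^ 2 * ‖x - y‖⁻¹)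
        - ∫ y in Ω, ‖Ψlim y‖ ^ 2 * ‖x - y‖⁻¹) 2 (volume.restrict Ω)
      ≤ C * eLpNorm (fun y => ‖Ψ m y‖ ^ 2 - ‖Ψlim y‖ ^ 2) 1 (volume.restrict Ω) := fun m =>
    eLpNorm_integral_mul_kernel_sub_le hK hKC hC (hdensity _ (hΨ m)) (hdensity _ hΨlim)
  have hlim := ENNReal.Tendsto.const_mul
    (tendsto_eLpNorm_norm_sq_sub_norm_sq (fun m => (hΨ m).1) hΨlim hconv) (Or.inr hC)
  rw [mul_zero] at hlim
  exact tendsto_of_tendsto_of_tendsto_of_le_of_le tendsto_const_nhds hlim (fun _ => zero_le)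
    hbound

/-- For a bounded measurable set `Ω ⊆ ℝ³`, the Hartree potential map
`Ψ ↦ V_H(ρ(Ψ))`, where `ρ(Ψ)(x) = Σⱼ |ψⱼ(x)|²` and
`V_H(ρ)(x) = ∫_Ω ρ(y)/‖x−y‖ dy`, is sequentially continuous from `L²(Ω; ℂᴺ)`
to `L²(Ω; ℝ)`: if `Ψₘ → Ψ` in `L²(Ω; ℂᴺ)` then `V_H(ρ(Ψₘ)) → V_H(ρ(Ψ))` in `L²(Ω; ℝ)`. -/
theorem hartree_continuous_L2_to_L2
    (Ω : Set (EuclideanSpace ℝ (Fin 3)))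
    (hΩm : MeasurableSet Ω) (hΩb : Bornology.IsBounded Ω)
    (N : ℕ) (hN : 1 ≤ N)
    (Ψ : ℕ → EuclideanSpace ℝ (Fin 3) → EuclideanSpace ℂ (Fin N))
    (Ψlim : EuclideanSpace ℝ (Fin 3) → EuclideanSpace ℂ (Fin N))
    (hΨ : ∀ m, MemLp (Ψ m) 2 (volume.restrict Ω))
    (hΨlim : MemLp Ψlim 2 (volume.restrict Ω))
    (hconv : Tendsto (fun m => eLpNorm (Ψ m - Ψlim) 2 (volume.restrict Ω)) atTop (nhds 0)) :
    Tendsto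
      (fun m => eLpNorm
        (fun x => (∫ y in Ω, (∑ j, ‖Ψ m y j‖ ^ 2) / ‖x - y‖ ∂volume)
                    - ∫ y in Ω, (∑ j, ‖Ψlim y j‖ ^ 2) / ‖x - y‖ ∂volume)
        2 (volume.restrict Ω))
      atTop (nhds 0) :=
  hartree_continuous_L2_to_L2_general Ω hΩb N Ψ Ψlim hΨ hΨlim hconv
end

section
/- Let Ω ⊂ ℝ³ be a bounded measurable set and N ≥ 1. Then there exists a constant C > 0, depending only on N and Ω, such that: for every Λ = (λ₁, …, λ_N) ∈ L^∞(Ω; ℂᴺ) and all Ψ = (ψ₁, …, ψ_N), Φ = (φ₁, …, φ_N) ∈ L²(Ω; ℂᴺ), the expression D_H(Ψ, Φ) := Σ_{k=1}^N ∫_Ω ∫_Ω (Σ_{j=1}^N (ψ_j(y) conj(λ_j(y)) + conj(ψ_j(y)) λ_j(y)))/‖x − y‖ · λ_k(x) conj(φ_k(x)) dy dx is well defined and satisfies |D_H(Ψ, Φ)| ≤ C ‖Λ‖²_{L^∞(Ω)} ‖Ψ‖_{L²(Ω)} ‖Φ‖_{L²(Ω)}. -/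
open MeasureTheory
open scoped ENNReal NNReal

/-!
Write the density as `ρ = ∑ⱼ (ψⱼ λ̄ⱼ + ψ̄ⱼ λⱼ) = ⟪Λ, Ψ⟫ + ⟪Ψ, Λ⟫`, so that
`|ρ| ≤ 2 √N ‖Λ‖_∞ |Ψ|` and `‖ρ‖_{L²} ≤ 2 √N ‖Λ‖_∞ ‖Ψ‖_{L²}`. Since `2 < 3`, the kernel
`y ↦ ‖x - y‖⁻¹` is square integrable on the bounded set `Ω`, with a bound uniform in `x`;
by Cauchy–Schwarz the Hartree potential `V(x) = ∫_Ω ρ(y) / ‖x - y‖ dy` is then bounded by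
`C_Ω ‖ρ‖_{L²}`. Finally each term `∫_Ω V λₖ φ̄ₖ` is at most
`‖V‖_∞ ‖Λ‖_∞ |Ω|^{1/2} ‖Φ‖_{L²}`, and there are `N` of them.
-/

open Metric Module
open scoped ComplexConjugate InnerProductSpace

section Lp

variable {α G : Type*} [MeasurableSpace α] [NormedAddCommGroup G] {μ : Measure α}

theorem MemLp.toReal_eLpNorm_two_eq_sqrt {f : α → G} (hf : MemLp f 2 μ) :
    (eLpNorm f 2 μ).toReal = √(∫ x, ‖f x‖ ^ 2 ∂μ) := by
  rw [hf.eLpNorm_eq_integral_rpow_norm two_ne_zero ENNReal.ofNat_ne_top,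
    ENNReal.toReal_ofReal (by positivity), Real.sqrt_eq_rpow]
  simp

theorem toReal_eLpNorm_le_mul_of_ae_le_mul {F : Type*} [NormedAddCommGroup F] {f : α → F}
    {g : α → G} {c : ℝ} {p : ℝ≥0∞} (hg : MemLp g p μ) (hc : 0 ≤ c)
    (h : ∀ᵐ x ∂μ, ‖f x‖ ≤ c * ‖g x‖) :
    (eLpNorm f p μ).toReal ≤ c * (eLpNorm g p μ).toReal := by
  simpa [ENNReal.toReal_mul, hc] using ENNReal.toReal_mono
    (ENNReal.mul_ne_top ENNReal.ofReal_ne_top hg.2.ne) (eLpNorm_le_mul_eLpNorm_of_ae_le_mul h p)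

theorem integral_norm_le_sqrt_mul_toReal_eLpNorm_two [IsFiniteMeasure μ] {f : α → G}
    (hf : MemLp f 2 μ) :
    ∫ x, ‖f x‖ ∂μ ≤ √(μ.real Set.univ) * (eLpNorm f 2 μ).toReal := by
  have h := eLpNorm_le_eLpNorm_mul_rpow_measure_univ one_le_two hf.1
  rw [integral_norm_eq_lintegral_enorm hf.1, ← eLpNorm_one_eq_lintegral_enorm]
  refine (ENNReal.toReal_mono (ENNReal.mul_ne_top hf.2.ne (by norm_num)) h).trans_eq ?_
  rw [ENNReal.toReal_mul, ← ENNReal.toReal_rpow, Real.sqrt_eq_rpow, mul_comm]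
  norm_num [measureReal_def]

theorem integrable_mul_and_norm_integral_le [IsFiniteMeasure μ] {g f : α → ℂ} {F : α → G}
    {c : ℝ} (hc : 0 ≤ c) (hg : AEStronglyMeasurable g μ) (hgc : ∀ᵐ x ∂μ, ‖g x‖ ≤ c)
    (hf : AEStronglyMeasurable f μ) (hfF : ∀ᵐ x ∂μ, ‖f x‖ ≤ ‖F x‖) (hF : MemLp F 2 μ) :
    Integrable (fun x => g x * f x) μ ∧
      ‖∫ x, g x * f x ∂μ‖ ≤ c * √(μ.real Set.univ) * (eLpNorm F 2 μ).toReal := by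
  have hFi : Integrable F μ := hF.integrable one_le_two
  refine ⟨(hFi.mono hf hfF).bdd_mul hg hgc, ?_⟩
  calc ‖∫ x, g x * f x ∂μ‖ ≤ ∫ x, c * ‖F x‖ ∂μ := by
        refine norm_integral_le_of_norm_le (hFi.norm.const_mul c) ?_
        filter_upwards [hgc, hfF] with x hgx hfx
        rw [norm_mul]
        exact mul_le_mul hgx hfx (norm_nonneg _) hc
    _ ≤ c * (√(μ.real Set.univ) * (eLpNorm F 2 μ).toReal) := by
        rw [integral_const_mul]
        exact mul_le_mul_of_nonneg_left (integral_norm_le_sqrt_mul_toReal_eLpNorm_two hF) hc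
    _ = _ := (mul_assoc _ _ _).symm

theorem ae_norm_le_toReal_iSup_essSup {ι F : Type*} [Countable ι] [SeminormedAddCommGroup F]
    {g : ι → α → F} (h : (⨆ i, essSup (fun x => (‖g i x‖₊ : ℝ≥0∞)) μ) ≠ ∞) :
    ∀ᵐ x ∂μ, ∀ i, ‖g i x‖ ≤ (⨆ i, essSup (fun x => (‖g i x‖₊ : ℝ≥0∞)) μ).toReal := by
  refine ae_all_iff.2 fun i =>
    (ENNReal.ae_le_essSup (fun x => (‖g i x‖₊ : ℝ≥0∞))).mono fun x hx => ?_
  simpa using ENNReal.toReal_mono h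
    (hx.trans (le_iSup (fun i => essSup (fun x => (‖g i x‖₊ : ℝ≥0∞)) μ) i))

end Lp

theorem norm_inner_add_inner_le {𝕜 F : Type*} [RCLike 𝕜] [NormedAddCommGroup F]
    [InnerProductSpace 𝕜 F] (u v : F) : ‖⟪u, v⟫_𝕜 + ⟪v, u⟫_𝕜‖ ≤ 2 * ‖u‖ * ‖v‖ := by
  calc ‖⟪u, v⟫_𝕜 + ⟪v, u⟫_𝕜‖ ≤ ‖u‖ * ‖v‖ + ‖v‖ * ‖u‖ :=
        norm_add_le_of_le (norm_inner_le_norm u v) (norm_inner_le_norm v u)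
    _ = 2 * ‖u‖ * ‖v‖ := by ring

section EuclideanSpace

variable {𝕜 ι : Type*} [RCLike 𝕜] [Fintype ι]

theorem EuclideanSpace.sum_mul_conj_add_conj_mul_eq_inner (u v : EuclideanSpace 𝕜 ι) :
    ∑ j, (u j * conj (v j) + conj (u j) * v j) = ⟪v, u⟫_𝕜 + ⟪u, v⟫_𝕜 := by
  simp only [PiLp.inner_apply, RCLike.inner_apply, Finset.sum_add_distrib, mul_comm]

theorem EuclideanSpace.norm_le_sqrt_card_mul {x : EuclideanSpace 𝕜 ι} {c : ℝ} (hc : 0 ≤ c)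
    (h : ∀ i, ‖x i‖ ≤ c) : ‖x‖ ≤ √(Fintype.card ι) * c := by
  rw [EuclideanSpace.norm_eq, ← Real.sqrt_sq hc, ← Real.sqrt_mul (Nat.cast_nonneg _)]
  gcongr
  calc ∑ i, ‖x i‖ ^ 2 ≤ ∑ _i : ι, c ^ 2 := by gcongr with i; exact h i
    _ = _ := by simp

theorem EuclideanSpace.norm_inner_add_inner_le_of_norm_apply_le {u v : EuclideanSpace 𝕜 ι}
    {c : ℝ} (hc : 0 ≤ c) (h : ∀ i, ‖u i‖ ≤ c) :
    ‖⟪u, v⟫_𝕜 + ⟪v, u⟫_𝕜‖ ≤ 2 * (√(Fintype.card ι) * c) * ‖v‖ := by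
  calc _ ≤ 2 * ‖u‖ * ‖v‖ := norm_inner_add_inner_le u v
    _ ≤ _ := by grw [norm_le_sqrt_card_mul hc h]

end EuclideanSpace

section Kernel

variable {E : Type*} [NormedAddCommGroup E] [NormedSpace ℝ E] [FiniteDimensional ℝ E]
  [MeasurableSpace E] [BorelSpace E] {μ : Measure E} [μ.IsAddHaarMeasure]

theorem setLIntegral_ball_rpow_neg_norm_lt_top {s : ℝ} (hs0 : 0 ≤ s) (hs : s < finrank ℝ E) :
    ∫⁻ z in ball 0 1, ENNReal.ofReal (‖z‖ ^ (-s)) ∂μ < ∞ :=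
  IntegrableOn.setLIntegral_lt_top <| integrableOn_ball_of_norm_le_rpow
    (Nat.cast_pos.mp (hs0.trans_lt hs)) hs (C := 1)
    (ae_of_all _ fun z => by rw [one_mul, Real.norm_of_nonneg (by positivity)])
    (measurable_norm.pow_const _).aestronglyMeasurable

/-- Away from the unit ball around `x` the kernel is at most `1`; on that ball it is a translate
of the kernel on `ball 0 1`. -/
theorem exists_setLIntegral_rpow_neg_norm_sub_le {Ω : Set E} (hΩ : Bornology.IsBounded Ω)
    {s : ℝ} (hs0 : 0 ≤ s) (hs : s < finrank ℝ E) :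
    ∃ C < ∞, ∀ x, ∫⁻ y in Ω, ENNReal.ofReal (‖x - y‖ ^ (-s)) ∂μ ≤ C := by
  set F : E → ℝ≥0∞ := (ball 0 1).indicator fun z => ENNReal.ofReal (‖z‖ ^ (-s))
  refine ⟨μ Ω + ∫⁻ z, F z ∂μ, ?_, fun x => ?_⟩
  · rw [lintegral_indicator measurableSet_ball]
    exact ENNReal.add_lt_top.2 ⟨hΩ.measure_lt_top, setLIntegral_ball_rpow_neg_norm_lt_top hs0 hs⟩
  have hle : ∀ y, ENNReal.ofReal (‖x - y‖ ^ (-s)) ≤ 1 + F (y - x) := by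
    intro y
    rw [norm_sub_rev]
    by_cases hy : ‖y - x‖ < 1
    · rw [show F (y - x) = _ from Set.indicator_of_mem (mem_ball_zero_iff.2 hy) _]
      exact le_add_self
    · exact le_add_right <| ENNReal.ofReal_le_one.2 <|
        Real.rpow_le_one_of_one_le_of_nonpos (not_lt.1 hy) (neg_nonpos.2 hs0)
  calc ∫⁻ y in Ω, ENNReal.ofReal (‖x - y‖ ^ (-s)) ∂μ
      ≤ ∫⁻ y in Ω, (1 + F (y - x)) ∂μ := lintegral_mono hle
    _ = μ Ω + ∫⁻ y in Ω, F (y - x) ∂μ := by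
      rw [lintegral_add_left measurable_const, setLIntegral_one]
    _ ≤ μ Ω + ∫⁻ y, F (y - x) ∂μ := by grw [setLIntegral_le_lintegral]
    _ = μ Ω + ∫⁻ z, F z ∂μ := by rw [lintegral_sub_right_eq_self]

theorem exists_eLpNorm_inv_norm_sub_le {Ω : Set E} (hΩ : Bornology.IsBounded Ω)
    {p : ℝ≥0∞} (hp0 : p ≠ 0) (hp : p < finrank ℝ E) :
    ∃ C : ℝ≥0, ∀ x, eLpNorm (fun y => ‖x - y‖⁻¹) p (μ.restrict Ω) ≤ C := by
  have hp_top : p ≠ ∞ := ne_top_of_lt hp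
  have hpd : p.toReal < finrank ℝ E := by
    simpa using (ENNReal.toReal_lt_toReal hp_top (ENNReal.natCast_ne_top _)).2 hp
  obtain ⟨K, hK, hKx⟩ :=
    exists_setLIntegral_rpow_neg_norm_sub_le (μ := μ) hΩ ENNReal.toReal_nonneg hpd
  refine ⟨(K ^ (1 / p.toReal)).toNNReal, fun x => ?_⟩
  have hpow (y : E) : ‖‖x - y‖⁻¹‖ₑ ^ p.toReal = ENNReal.ofReal (‖x - y‖ ^ (-p.toReal)) := by
    rw [← ofReal_norm, norm_inv, norm_norm, ENNReal.ofReal_rpow_of_nonneg (by positivity)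
      ENNReal.toReal_nonneg, Real.inv_rpow (norm_nonneg _), Real.rpow_neg (norm_nonneg _)]
  rw [eLpNorm_eq_lintegral_rpow_enorm_toReal hp0 hp_top, ENNReal.coe_toNNReal
    (ENNReal.rpow_ne_top_of_nonneg (by positivity) hK.ne)]
  simp_rw [hpow]
  gcongr
  exact hKx x

end Kernel

section Potential

variable {E : Type*} [NormedAddCommGroup E] [MeasurableSpace E]

noncomputable def hartreePotential (μ : Measure E) (ρ : E → ℂ) (x : E) : ℂ :=
  ∫ y, ρ y / (‖x - y‖ : ℂ) ∂μ

theorem enorm_hartreePotential_le [OpensMeasurableSpace E] (μ : Measure E) {ρ : E → ℂ}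
    (hρ : AEStronglyMeasurable ρ μ) (x : E) :
    ‖hartreePotential μ ρ x‖ₑ ≤ eLpNorm (fun y => ‖x - y‖⁻¹) 2 μ * eLpNorm ρ 2 μ := by
  have hsmul : hartreePotential μ ρ x = ∫ y, ((fun y => ‖x - y‖⁻¹) • ρ) y ∂μ := by
    simp only [hartreePotential, Pi.smul_apply', Complex.real_smul, Complex.ofReal_inv,
      div_eq_inv_mul]
  calc ‖hartreePotential μ ρ x‖ₑ ≤ ∫⁻ y, ‖((fun y => ‖x - y‖⁻¹) • ρ) y‖ₑ ∂μ :=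
        hsmul ▸ enorm_integral_le_lintegral_enorm _
    _ = eLpNorm ((fun y => ‖x - y‖⁻¹) • ρ) 1 μ := eLpNorm_one_eq_lintegral_enorm.symm
    _ ≤ _ := eLpNorm_smul_le_mul_eLpNorm hρ
      (continuous_const.sub continuous_id).norm.measurable.inv.aestronglyMeasurable

theorem aestronglyMeasurable_hartreePotential [OpensMeasurableSpace E]
    [SecondCountableTopology E] {μ : Measure E} [SFinite μ] {ρ : E → ℂ}
    (hρ : AEStronglyMeasurable ρ μ) (ν : Measure E) :
    AEStronglyMeasurable (hartreePotential μ ρ) ν :=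
  AEStronglyMeasurable.integral_prod_right' (f := fun p : E × E => ρ p.2 / (‖p.1 - p.2‖ : ℂ))
    (hρ.comp_snd.div₀
      (by fun_prop : Continuous fun p : E × E => (‖p.1 - p.2‖ : ℂ)).aestronglyMeasurable)

end Potential

theorem exists_norm_hartreePotential_le {E : Type*} [NormedAddCommGroup E] [NormedSpace ℝ E]
    [FiniteDimensional ℝ E] [MeasurableSpace E] [BorelSpace E] {μ : Measure E}
    [μ.IsAddHaarMeasure] {Ω : Set E} (hΩ : Bornology.IsBounded Ω) (hd : 2 < finrank ℝ E) :
    ∃ C : ℝ≥0, ∀ ρ : E → ℂ, MemLp ρ 2 (μ.restrict Ω) → ∀ x,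
      ‖hartreePotential (μ.restrict Ω) ρ x‖ ≤ C * (eLpNorm ρ 2 (μ.restrict Ω)).toReal := by
  obtain ⟨C, hC⟩ := exists_eLpNorm_inv_norm_sub_le (μ := μ) hΩ two_ne_zero (by exact_mod_cast hd)
  refine ⟨C, fun ρ hρ x => ?_⟩
  have h := (enorm_hartreePotential_le _ hρ.1 x).trans (mul_le_mul_left (hC x) _)
  rw [← ofReal_norm] at h
  simpa [ENNReal.toReal_mul] using ENNReal.toReal_mono (ENNReal.mul_ne_top (by simp) hρ.2.ne) h

theorem integrable_mul_conj_and_norm_sum_integral_le {α ι : Type*} [MeasurableSpace α]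
    {μ : Measure α} [IsFiniteMeasure μ] [Fintype ι] {V : α → ℂ} {Λ Φ : α → EuclideanSpace ℂ ι}
    {M ℓ : ℝ} (hM : 0 ≤ M) (hℓ : 0 ≤ ℓ) (hV : AEStronglyMeasurable V μ) (hVM : ∀ᵐ x ∂μ, ‖V x‖ ≤ M)
    (hΛ : AEStronglyMeasurable Λ μ) (hΛℓ : ∀ᵐ x ∂μ, ∀ k, ‖Λ x k‖ ≤ ℓ) (hΦ : MemLp Φ 2 μ) :
    (∀ k, Integrable (fun x => V x * Λ x k * conj (Φ x k)) μ) ∧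
      ‖∑ k, ∫ x, V x * Λ x k * conj (Φ x k) ∂μ‖
        ≤ Fintype.card ι * M * ℓ * √(μ.real Set.univ) * (eLpNorm Φ 2 μ).toReal := by
  have hterm (k : ι) := integrable_mul_and_norm_integral_le (c := M * ℓ) (F := Φ)
    (g := fun x => V x * Λ x k) (f := fun x => conj (Φ x k)) (by positivity)
    (hV.mul ((PiLp.continuous_apply 2 _ k).comp_aestronglyMeasurable hΛ))
    (by
      filter_upwards [hVM, hΛℓ] with x hVx hΛx
      rw [norm_mul]
      exact mul_le_mul hVx (hΛx k) (norm_nonneg _) hM)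
    (Complex.continuous_conj.comp_aestronglyMeasurable
      ((PiLp.continuous_apply 2 _ k).comp_aestronglyMeasurable hΦ.1))
    (ae_of_all _ fun x => by simpa using PiLp.norm_apply_le (Φ x) k) hΦ
  refine ⟨fun k => (hterm k).1, ?_⟩
  calc _ ≤ ∑ _k : ι, M * ℓ * √(μ.real Set.univ) * (eLpNorm Φ 2 μ).toReal :=
        (norm_sum_le _ _).trans (Finset.sum_le_sum fun k _ => (hterm k).2)
    _ = _ := by simp only [Finset.sum_const, Finset.card_univ, nsmul_eq_mul]; ring

theorem DH_bound_general
    (Ω : Set (EuclideanSpace ℝ (Fin 3)))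
    (hΩb : Bornology.IsBounded Ω)
    (N : ℕ) :
    ∃ C > (0 : ℝ), ∀ Λ Ψ Φ : EuclideanSpace ℝ (Fin 3) → EuclideanSpace ℂ (Fin N),
      StronglyMeasurable Λ →
      (⨆ k : Fin N, essSup (fun x => (‖Λ x k‖₊ : ℝ≥0∞)) (volume.restrict Ω)) ≠ ⊤ →
      MemLp Ψ 2 (volume.restrict Ω) → MemLp Φ 2 (volume.restrict Ω) →
      (∀ k : Fin N, IntegrableOn
          (fun x => (∫ y in Ω,
                (∑ j, (Ψ y j * (starRingEnd ℂ) (Λ y j) + (starRingEnd ℂ) (Ψ y j) * Λ y j))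
                  / (‖x - y‖ : ℂ) ∂volume)
              * Λ x k * (starRingEnd ℂ) (Φ x k)) Ω volume)
      ∧ ‖∑ k : Fin N, ∫ x in Ω,
            (∫ y in Ω,
                (∑ j, (Ψ y j * (starRingEnd ℂ) (Λ y j) + (starRingEnd ℂ) (Ψ y j) * Λ y j))
                  / (‖x - y‖ : ℂ) ∂volume)
              * Λ x k * (starRingEnd ℂ) (Φ x k) ∂volume‖
          ≤ C * ((⨆ k : Fin N, essSup (fun x => (‖Λ x k‖₊ : ℝ≥0∞))
                    (volume.restrict Ω)).toReal) ^ 2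
              * Real.sqrt (∫ x in Ω, ∑ j, ‖Ψ x j‖ ^ 2 ∂volume)
              * Real.sqrt (∫ x in Ω, ∑ j, ‖Φ x j‖ ^ 2 ∂volume) := by
  obtain ⟨C, hC⟩ := exists_norm_hartreePotential_le (μ := volume) hΩb (by simp)
  set μ := volume.restrict Ω
  have : IsFiniteMeasure μ := isFiniteMeasure_restrict.2 hΩb.measure_lt_top.ne
  refine ⟨2 * N * √N * C * √(μ.real Set.univ) + 1, by positivity, ?_⟩
  intro Λ Ψ Φ hΛ hΛ_top hΨ hΦ
  simp only [EuclideanSpace.sum_mul_conj_add_conj_mul_eq_inner, ← EuclideanSpace.norm_sq_eq,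
    ← MemLp.toReal_eLpNorm_two_eq_sqrt hΨ, ← MemLp.toReal_eLpNorm_two_eq_sqrt hΦ]
  set ℓ := (⨆ k : Fin N, essSup (fun x => (‖Λ x k‖₊ : ℝ≥0∞)) μ).toReal
  set ρ := fun y => ⟪Λ y, Ψ y⟫_ℂ + ⟪Ψ y, Λ y⟫_ℂ
  have hΛk : ∀ᵐ x ∂μ, ∀ k, ‖Λ x k‖ ≤ ℓ :=
    ae_norm_le_toReal_iSup_essSup (g := fun k x => Λ x k) hΛ_top
  have hρ : ∀ᵐ y ∂μ, ‖ρ y‖ ≤ 2 * (√N * ℓ) * ‖Ψ y‖ := hΛk.mono fun y hy => by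
    simpa using EuclideanSpace.norm_inner_add_inner_le_of_norm_apply_le (v := Ψ y)
      ENNReal.toReal_nonneg hy
  have hρm : AEStronglyMeasurable ρ μ :=
    (hΛ.aestronglyMeasurable.inner hΨ.1).add (hΨ.1.inner hΛ.aestronglyMeasurable)
  have hV (x) : ‖hartreePotential μ ρ x‖ ≤ C * (2 * (√N * ℓ) * (eLpNorm Ψ 2 μ).toReal) :=
    (hC ρ (hΨ.of_le_mul hρm hρ) x).trans <| mul_le_mul_of_nonneg_left
      (toReal_eLpNorm_le_mul_of_ae_le_mul hΨ (by positivity) hρ) C.coe_nonneg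
  obtain ⟨hint, hnorm⟩ := integrable_mul_conj_and_norm_sum_integral_le (by positivity)
    ENNReal.toReal_nonneg (aestronglyMeasurable_hartreePotential hρm μ) (ae_of_all _ hV)
    hΛ.aestronglyMeasurable hΛk hΦ
  refine ⟨hint, hnorm.trans ?_⟩
  calc _ = 2 * N * √N * C * √(μ.real Set.univ) * ℓ ^ 2 * (eLpNorm Ψ 2 μ).toReal
        * (eLpNorm Φ 2 μ).toReal := by
        simp only [Fintype.card_fin]
        ring
    _ ≤ _ := by gcongr; linarith

/-- Bound on the Hartree bilinear form `D_H` of the adjoint Kohn–Sham equations.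
For a bounded measurable set `Ω ⊆ ℝ³` there is `C > 0`, depending only on `N` and `Ω`,
such that for all `Λ ∈ L^∞(Ω; ℂᴺ)` (with `‖Λ‖_{L^∞} = max_k ess sup |λₖ|`) and all
`Ψ, Φ ∈ L²(Ω; ℂᴺ)`, the expression
`D_H(Ψ, Φ) = Σₖ ∫_Ω (∫_Ω Σⱼ (ψⱼ(y) conj λⱼ(y) + conj ψⱼ(y) λⱼ(y)) / ‖x−y‖ dy) λₖ(x) conj φₖ(x) dx`
is well defined and `|D_H(Ψ, Φ)| ≤ C ‖Λ‖²_{L^∞} ‖Ψ‖_{L²(Ω)} ‖Φ‖_{L²(Ω)}`. -/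
theorem DH_bound
    (Ω : Set (EuclideanSpace ℝ (Fin 3)))
    (hΩm : MeasurableSet Ω) (hΩb : Bornology.IsBounded Ω)
    (N : ℕ) (hN : 1 ≤ N) :
    ∃ C > (0 : ℝ), ∀ Λ Ψ Φ : EuclideanSpace ℝ (Fin 3) → EuclideanSpace ℂ (Fin N),
      StronglyMeasurable Λ →
      (⨆ k : Fin N, essSup (fun x => (‖Λ x k‖₊ : ℝ≥0∞)) (volume.restrict Ω)) ≠ ⊤ →
      MemLp Ψ 2 (volume.restrict Ω) → MemLp Φ 2 (volume.restrict Ω) →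
      (∀ k : Fin N, IntegrableOn
          (fun x => (∫ y in Ω,
                (∑ j, (Ψ y j * (starRingEnd ℂ) (Λ y j) + (starRingEnd ℂ) (Ψ y j) * Λ y j))
                  / (‖x - y‖ : ℂ) ∂volume)
              * Λ x k * (starRingEnd ℂ) (Φ x k)) Ω volume)
      ∧ ‖∑ k : Fin N, ∫ x in Ω,
            (∫ y in Ω,
                (∑ j, (Ψ y j * (starRingEnd ℂ) (Λ y j) + (starRingEnd ℂ) (Ψ y j) * Λ y j))
                  / (‖x - y‖ : ℂ) ∂volume)
              * Λ x k * (starRingEnd ℂ) (Φ x k) ∂volume‖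
          ≤ C * ((⨆ k : Fin N, essSup (fun x => (‖Λ x k‖₊ : ℝ≥0∞))
                    (volume.restrict Ω)).toReal) ^ 2
              * Real.sqrt (∫ x in Ω, ∑ j, ‖Ψ x j‖ ^ 2 ∂volume)
              * Real.sqrt (∫ x in Ω, ∑ j, ‖Φ x j‖ ^ 2 ∂volume) :=
  DH_bound_general Ω hΩb N
end

section
/- Let Ω ⊂ ℝ³ be a bounded open set and N ≥ 1. There exists a constant C > 0, depending only on N, such that for every continuously differentiable Φ = (φ₁, …, φ_N) : ℝ³ → ℂᴺ with compact support contained in Ω and every Υ ∈ L²(Ω; ℂᴺ): ‖(ρ(Φ) ⋆ w) Υ‖_{L²(Ω)} ≤ C ‖Φ‖_{L²} ‖∇Φ‖_{L²} ‖Υ‖_{L²(Ω)}, where (ρ(Φ) ⋆ w)(x) := ∫_{ℝ³} ρ(Φ)(y)/‖x − y‖ dy and ((ρ(Φ) ⋆ w) Υ)(x) := (ρ(Φ) ⋆ w)(x) · Υ(x). -/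
/-!
The Coulomb potential of `ρ = ‖Φ‖²` is bounded uniformly in `x`. By Cauchy–Schwarz,
`∫ ρ(y) / ‖x - y‖ dy ≤ ‖Φ‖₂ (∫ ρ(y) / ‖x - y‖² dy)^{1/2}`, and Hardy's inequality
`∫ ‖F y‖² / ‖x - y‖² dy ≤ (2 / (d - 2))² ‖DF‖₂²` bounds the last factor by `2 ‖DΦ‖₂` in `ℝ³`.
Multiplication by a function bounded by `2 ‖Φ‖₂ ‖DΦ‖₂` then gives the claim with `C = 2`.

Hardy's inequality is first proved for the weight `ψ = (‖x - y‖² + ε)⁻¹`: the vector field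
`ψ(y) (x - y)` has divergence `2ψ²‖x - y‖² - dψ ≤ -(d - 2)ψ`, so integrating `∇‖F‖²` against it
gives `(d - 2) ∫ ‖F‖² ψ ≤ 2 ∫ ‖F‖ √ψ ‖DF‖`, which Cauchy–Schwarz closes up. Fatou's lemma then
lets `ε → 0`.
-/

open MeasureTheory Filter Topology Module

theorem integral_mul_le_sqrt_mul_sqrt {α : Type*} [MeasurableSpace α] {μ : Measure α}
    {f g : α → ℝ} (hf : 0 ≤ f) (hg : 0 ≤ g) (hf2 : MemLp f 2 μ) (hg2 : MemLp g 2 μ) :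
    ∫ a, f a * g a ∂μ ≤ √(∫ a, f a ^ 2 ∂μ) * √(∫ a, g a ^ 2 ∂μ) := by
  have h := integral_mul_le_Lp_mul_Lq_of_nonneg (μ := μ) Real.HolderConjugate.two_two
    (Eventually.of_forall hf) (Eventually.of_forall hg) (by simpa using hf2) (by simpa using hg2)
  simpa only [Real.rpow_two, Real.sqrt_eq_rpow] using h

theorem le_sq_div_mul_of_mul_le_mul_sqrt {a b c : ℝ} (hc : 0 < c) (ha : 0 ≤ a) (hb : 0 ≤ b)
    (h : c * a ≤ 2 * (√a * √b)) : a ≤ (2 / c) ^ 2 * b := by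
  rw [div_pow, div_mul_eq_mul_div, le_div_iff₀ (by positivity)]
  have hsa := Real.sq_sqrt ha
  have hsb := Real.sq_sqrt hb
  nlinarith [Real.sqrt_nonneg a, Real.sqrt_nonneg b, sq_nonneg (c * √a - 2 * √b)]

theorem inv_sq_add_mul_le_sqrt {r ε : ℝ} (hr : 0 ≤ r) (hε : 0 < ε) :
    (r ^ 2 + ε)⁻¹ * r ≤ √((r ^ 2 + ε)⁻¹) := by
  rw [Real.le_sqrt (by positivity) (by positivity), mul_pow, sq, mul_assoc,
    mul_le_iff_le_one_right (by positivity), inv_mul_le_one₀ (by positivity)]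
  linarith

theorem integrable_and_integral_le_of_tendsto {α : Type*} [MeasurableSpace α] {μ : Measure α}
    {f : ℕ → α → ℝ} {g : α → ℝ} {B : ℝ} (hf : ∀ n, Integrable (f n) μ) (hf0 : ∀ n, 0 ≤ f n)
    (hg : AEStronglyMeasurable g μ) (hlim : ∀ᵐ a ∂μ, Tendsto (fun n => f n a) atTop (𝓝 (g a)))
    (hB : ∀ n, ∫ a, f n a ∂μ ≤ B) :
    Integrable g μ ∧ ∫ a, g a ∂μ ≤ B := by
  have hg0 : 0 ≤ᵐ[μ] g := hlim.mono fun a ha => ge_of_tendsto' ha fun n => hf0 n a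
  have hlint : ∫⁻ a, ENNReal.ofReal (g a) ∂μ ≤ ENNReal.ofReal B := calc
    ∫⁻ a, ENNReal.ofReal (g a) ∂μ = ∫⁻ a, liminf (fun n => ENNReal.ofReal (f n a)) atTop ∂μ :=
      lintegral_congr_ae <| hlim.mono fun a ha =>
        ((ENNReal.continuous_ofReal.tendsto _).comp ha).liminf_eq.symm
    _ ≤ liminf (fun n => ∫⁻ a, ENNReal.ofReal (f n a) ∂μ) atTop :=
      lintegral_liminf_le' fun n => (hf n).aemeasurable.ennreal_ofReal
    _ ≤ ENNReal.ofReal B := liminf_le_of_frequently_le' <| Frequently.of_forall fun n => by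
      rw [← ofReal_integral_eq_lintegral_ofReal (hf n) (Eventually.of_forall (hf0 n))]
      exact ENNReal.ofReal_le_ofReal (hB n)
  refine ⟨⟨hg, (hasFiniteIntegral_iff_ofReal hg0).2 (hlint.trans_lt ENNReal.ofReal_lt_top)⟩, ?_⟩
  rw [integral_eq_lintegral_of_nonneg_ae hg0 hg]
  exact ENNReal.toReal_le_of_le_ofReal ((integral_nonneg (hf0 0)).trans (hB 0)) hlint

section Hardy

variable {E : Type*} [NormedAddCommGroup E] [InnerProductSpace ℝ E]
  {H : Type*} [NormedAddCommGroup H] [InnerProductSpace ℝ H]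

theorem fderiv_norm_sq_apply_le {F : E → H} {y : E} (hF : DifferentiableAt ℝ F y) (v : E) :
    fderiv ℝ (fun z => ‖F z‖ ^ 2) y v ≤ 2 * ‖F y‖ * ‖fderiv ℝ F y‖ * ‖v‖ := by
  rw [hF.hasFDerivAt.norm_sq.fderiv]
  simp only [smul_apply, ContinuousLinearMap.comp_apply, innerSL_apply_apply,
    nsmul_eq_mul, Nat.cast_ofNat, mul_assoc]
  gcongr
  exact (real_inner_le_norm _ _).trans
    (mul_le_mul_of_nonneg_left ((fderiv ℝ F y).le_opNorm v) (norm_nonneg _))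

theorem trace_fderiv_inv_norm_sq_add_smul [FiniteDimensional ℝ E] (x y : E) {ε : ℝ} (hε : 0 < ε) :
    LinearMap.trace ℝ E (fderiv ℝ (fun z => (‖x - z‖ ^ 2 + ε)⁻¹ • (x - z)) y) =
      2 * ((‖x - y‖ ^ 2 + ε)⁻¹) ^ 2 * ‖x - y‖ ^ 2 - finrank ℝ E * (‖x - y‖ ^ 2 + ε)⁻¹ := by
  have hsub : HasFDerivAt (fun z => x - z) (-ContinuousLinearMap.id ℝ E) y :=
    (hasFDerivAt_id y).const_sub x
  have hψ := (hasDerivAt_inv (by positivity : ‖x - y‖ ^ 2 + ε ≠ 0)).comp_hasFDerivAt y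
    (hsub.norm_sq.add_const ε)
  have hV : HasFDerivAt (fun z => (‖x - z‖ ^ 2 + ε)⁻¹ • (x - z)) _ y := hψ.smul hsub
  rw [hV.fderiv]
  simp only [Function.comp_apply, smul_neg, ContinuousLinearMap.comp_neg,
    ContinuousLinearMap.comp_id, neg_smul, ContinuousLinearMap.toLinearMap_add,
    ContinuousLinearMap.toLinearMap_neg, ContinuousLinearMap.toLinearMap_smul,
    ContinuousLinearMap.coe_id, ContinuousLinearMap.coe_smulRight,
    ContinuousLinearMap.toLinearMap_innerSL_apply, map_add, map_neg, map_smul, LinearMap.trace_id,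
    smul_eq_mul, LinearMap.trace_smulRight, LinearMap.neg_apply, LinearMap.smul_apply,
    innerₛₗ_apply_apply, nsmul_eq_mul, real_inner_self_eq_norm_sq, inv_pow]
  ring

variable [MeasurableSpace E] [BorelSpace E] {μ : Measure E}

theorem integral_fderiv_norm_sq_apply_le [IsFiniteMeasureOnCompacts μ] {F : E → H}
    (hF : ContDiff ℝ 1 F) (hFc : HasCompactSupport F) (x : E) {ε : ℝ} (hε : 0 < ε) :
    ∫ y, fderiv ℝ (fun z => ‖F z‖ ^ 2) y ((‖x - y‖ ^ 2 + ε)⁻¹ • (x - y)) ∂μ ≤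
      2 * (√(∫ y, ‖F y‖ ^ 2 * (‖x - y‖ ^ 2 + ε)⁻¹ ∂μ) * √(∫ y, ‖fderiv ℝ F y‖ ^ 2 ∂μ)) := by
  set ψ : E → ℝ := fun y => (‖x - y‖ ^ 2 + ε)⁻¹
  have hψc : Continuous ψ := Continuous.inv₀ (by fun_prop) fun y => by positivity
  have hψ0 : ∀ y, 0 ≤ ψ y := fun y => by positivity
  have hDF := hF.continuous_fderiv one_ne_zero
  have hgc : HasCompactSupport fun y => ‖F y‖ ^ 2 :=
    hFc.comp_left (g := fun v => ‖v‖ ^ 2) (by simp)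
  have hCS := integral_mul_le_sqrt_mul_sqrt (μ := μ) (f := fun y => ‖F y‖ * √(ψ y))
    (g := fun y => ‖fderiv ℝ F y‖) (fun y => by positivity) (fun y => norm_nonneg _)
    ((hF.continuous.norm.mul (by fun_prop)).memLp_of_hasCompactSupport hFc.norm.mul_right)
    (hDF.norm.memLp_of_hasCompactSupport (hFc.fderiv ℝ).norm)
  simp only [mul_pow, Real.sq_sqrt (hψ0 _)] at hCS
  calc ∫ y, fderiv ℝ (fun z => ‖F z‖ ^ 2) y (ψ y • (x - y)) ∂μ
      ≤ ∫ y, 2 * (‖F y‖ * √(ψ y) * ‖fderiv ℝ F y‖) ∂μ := by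
        refine integral_mono ?_ ?_ fun y => ?_
        · exact (((hF.norm_sq ℝ).continuous_fderiv one_ne_zero).clm_apply (by fun_prop))
            |>.integrable_of_hasCompactSupport
              ((hgc.fderiv ℝ).mono fun y hy h => hy (by simp [h]))
        · exact ((hF.continuous.norm.mul (by fun_prop)).mul hDF.norm)
            |>.integrable_of_hasCompactSupport hFc.norm.mul_right.mul_right |>.const_mul 2
        · have hψr : ψ y * ‖x - y‖ ≤ √(ψ y) := inv_sq_add_mul_le_sqrt (norm_nonneg _) hε
          refine (fderiv_norm_sq_apply_le ((hF.differentiable one_ne_zero) y) _).trans ?_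
          rw [norm_smul, Real.norm_of_nonneg (hψ0 y)]
          calc 2 * ‖F y‖ * ‖fderiv ℝ F y‖ * (ψ y * ‖x - y‖)
              ≤ 2 * ‖F y‖ * ‖fderiv ℝ F y‖ * √(ψ y) := by gcongr
            _ = 2 * (‖F y‖ * √(ψ y) * ‖fderiv ℝ F y‖) := by ring
    _ ≤ 2 * (√(∫ y, ‖F y‖ ^ 2 * ψ y ∂μ) * √(∫ y, ‖fderiv ℝ F y‖ ^ 2 ∂μ)) := by
        rw [integral_const_mul]
        gcongr

variable [FiniteDimensional ℝ E] [μ.IsAddHaarMeasure]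

theorem integral_fderiv_apply_eq_neg_integral_mul_trace {g : E → ℝ} {V : E → E}
    (hg : ContDiff ℝ 1 g) (hgc : HasCompactSupport g) (hV : ContDiff ℝ 1 V) :
    ∫ y, fderiv ℝ g y (V y) ∂μ = -∫ y, g y * LinearMap.trace ℝ E (fderiv ℝ V y) ∂μ := by
  let b := stdOrthonormalBasis ℝ E
  set Vb : Fin (finrank ℝ E) → E → ℝ := fun i y => inner ℝ (b i) (V y)
  have hVb : ∀ i, ContDiff ℝ 1 (Vb i) := fun i => contDiff_const.inner ℝ hV
  have hg_mul : ∀ {f : E → ℝ}, Continuous f → Integrable (fun y => g y * f y) μ := fun hf =>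
    (hg.continuous.mul hf).integrable_of_hasCompactSupport hgc.mul_right
  have hg_dVb : ∀ i, Integrable (fun y => g y * fderiv ℝ (Vb i) y (b i)) μ := fun i =>
    hg_mul (((hVb i).continuous_fderiv one_ne_zero).clm_apply continuous_const)
  have hdg_Vb : ∀ i, Integrable (fun y => fderiv ℝ g y (b i) * Vb i y) μ := fun i =>
    (((hg.continuous_fderiv one_ne_zero).clm_apply continuous_const).mul
      (hVb i).continuous).integrable_of_hasCompactSupport (hgc.fderiv_apply ℝ (b i)).mul_right
  have hexpand : ∀ y, fderiv ℝ g y (V y) = ∑ i, fderiv ℝ g y (b i) * Vb i y := fun y => by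
    conv_lhs => rw [← b.sum_repr' (V y)]
    simp [Vb, mul_comm]
  have htrace : ∀ y, LinearMap.trace ℝ E (fderiv ℝ V y) = ∑ i, fderiv ℝ (Vb i) y (b i) :=
    fun y => by
      rw [LinearMap.trace_eq_sum_inner _ b]
      refine Finset.sum_congr rfl fun i _ => ?_
      rw [fderiv_inner_apply ℝ (differentiableAt_const _) ((hV.differentiable one_ne_zero) y)]
      simp
  calc ∫ y, fderiv ℝ g y (V y) ∂μ = ∑ i, ∫ y, fderiv ℝ g y (b i) * Vb i y ∂μ := by
        simp_rw [hexpand]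
        exact integral_finsetSum _ fun i _ => hdg_Vb i
    _ = ∑ i, -∫ y, g y * fderiv ℝ (Vb i) y (b i) ∂μ := by
        refine Finset.sum_congr rfl fun i _ => ?_
        rw [integral_mul_fderiv_eq_neg_fderiv_mul_of_integrable (hdg_Vb i) (hg_dVb i)
          (hg_mul (hVb i).continuous) (fun y _ => (hg.differentiable one_ne_zero) y)
          (fun y _ => ((hVb i).differentiable one_ne_zero) y), neg_neg]
    _ = -∫ y, g y * LinearMap.trace ℝ E (fderiv ℝ V y) ∂μ := by
        simp_rw [htrace, Finset.mul_sum]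
        rw [integral_finsetSum _ fun i _ => hg_dVb i, Finset.sum_neg_distrib]

theorem finrank_sub_two_mul_integral_le {g : E → ℝ} (hg : ContDiff ℝ 1 g)
    (hgc : HasCompactSupport g) (hg0 : 0 ≤ g) (x : E) {ε : ℝ} (hε : 0 < ε) :
    (finrank ℝ E - 2) * ∫ y, g y * (‖x - y‖ ^ 2 + ε)⁻¹ ∂μ ≤
      ∫ y, fderiv ℝ g y ((‖x - y‖ ^ 2 + ε)⁻¹ • (x - y)) ∂μ := by
  set ψ : E → ℝ := fun y => (‖x - y‖ ^ 2 + ε)⁻¹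
  have hψd : ContDiff ℝ 1 ψ :=
    ((contDiff_const.sub contDiff_id).norm_sq ℝ |>.add contDiff_const).inv fun y => by positivity
  have hint : ∀ {f : E → ℝ}, Continuous f → Integrable (fun y => g y * f y) μ := fun hf =>
    (hg.continuous.mul hf).integrable_of_hasCompactSupport hgc.mul_right
  calc (finrank ℝ E - 2) * ∫ y, g y * ψ y ∂μ = ∫ y, (finrank ℝ E - 2) * (g y * ψ y) ∂μ :=
        (integral_const_mul _ _).symm
    _ ≤ ∫ y, g y * (finrank ℝ E * ψ y - 2 * ψ y ^ 2 * ‖x - y‖ ^ 2) ∂μ := by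
        refine integral_mono (hint hψd.continuous |>.const_mul _)
          (hint (by fun_prop)) fun y => ?_
        have hψr : ψ y * ‖x - y‖ ^ 2 ≤ 1 := (inv_mul_le_one₀ (by positivity)).2 (by linarith)
        have hψ0 : 0 ≤ ψ y := by positivity
        nlinarith [mul_nonneg (mul_nonneg (hg0 y) hψ0) (sub_nonneg.2 hψr)]
    _ = -∫ y, g y * LinearMap.trace ℝ E (fderiv ℝ (fun z => ψ z • (x - z)) y) ∂μ := by
        rw [← integral_neg]
        congr 1 with y
        rw [trace_fderiv_inv_norm_sq_add_smul x y hε]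
        ring
    _ = ∫ y, fderiv ℝ g y (ψ y • (x - y)) ∂μ :=
        (integral_fderiv_apply_eq_neg_integral_mul_trace hg hgc
          (hψd.smul (contDiff_const.sub contDiff_id))).symm

theorem integral_norm_sq_mul_inv_le (hd : 3 ≤ finrank ℝ E) {F : E → H} (hF : ContDiff ℝ 1 F)
    (hFc : HasCompactSupport F) (x : E) {ε : ℝ} (hε : 0 < ε) :
    ∫ y, ‖F y‖ ^ 2 * (‖x - y‖ ^ 2 + ε)⁻¹ ∂μ ≤
      (2 / (finrank ℝ E - 2)) ^ 2 * ∫ y, ‖fderiv ℝ F y‖ ^ 2 ∂μ := by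
  have hd' : (3 : ℝ) ≤ finrank ℝ E := by exact_mod_cast hd
  refine le_sq_div_mul_of_mul_le_mul_sqrt (by linarith)
    (integral_nonneg fun y => by positivity) (integral_nonneg fun y => by positivity) ?_
  exact (finrank_sub_two_mul_integral_le (hF.norm_sq ℝ)
    (hFc.comp_left (g := fun v => ‖v‖ ^ 2) (by simp)) (fun y => sq_nonneg _) x hε).trans
    (integral_fderiv_norm_sq_apply_le hF hFc x hε)

theorem hardy_inequality (hd : 3 ≤ finrank ℝ E) {F : E → H} (hF : ContDiff ℝ 1 F)
    (hFc : HasCompactSupport F) (x : E) :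
    Integrable (fun y => ‖F y‖ ^ 2 / ‖x - y‖ ^ 2) μ ∧
      ∫ y, ‖F y‖ ^ 2 / ‖x - y‖ ^ 2 ∂μ ≤
        (2 / (finrank ℝ E - 2)) ^ 2 * ∫ y, ‖fderiv ℝ F y‖ ^ 2 ∂μ := by
  have : Nontrivial E := Module.nontrivial_of_finrank_pos (R := ℝ) (by omega)
  have hε : ∀ n : ℕ, 0 < 1 / ((n : ℝ) + 1) := fun n => by positivity
  refine integrable_and_integral_le_of_tendsto
    (f := fun n y => ‖F y‖ ^ 2 * (‖x - y‖ ^ 2 + 1 / ((n : ℝ) + 1))⁻¹) (fun n => ?_)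
    (fun n y => by positivity) ?_ ?_
    (fun n => integral_norm_sq_mul_inv_le hd hF hFc x (hε n))
  · refine Continuous.integrable_of_hasCompactSupport ?_
      (hFc.comp_left (g := fun v => ‖v‖ ^ 2) (by simp)).mul_right
    exact (hF.continuous.norm.pow 2).mul <| Continuous.inv₀ (by fun_prop) fun y =>
      (add_pos_of_nonneg_of_pos (sq_nonneg _) (hε n)).ne'
  · exact (hF.continuous.norm.pow 2 |>.measurable.div (by fun_prop)).aestronglyMeasurable
  · filter_upwards [μ.ae_ne x] with y hy
    have hxy : ‖x - y‖ ^ 2 ≠ 0 := by simpa [sub_eq_zero] using hy.symm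
    simpa [div_eq_mul_inv] using ((tendsto_const_nhds.add
      tendsto_one_div_add_atTop_nhds_zero_nat).inv₀ (by simpa using hxy)).const_mul (‖F y‖ ^ 2)

theorem integral_norm_sq_div_norm_sub_le (hd : 3 ≤ finrank ℝ E) {F : E → H}
    (hF : ContDiff ℝ 1 F) (hFc : HasCompactSupport F) (x : E) :
    ∫ y, ‖F y‖ ^ 2 / ‖x - y‖ ∂μ ≤
      2 / (finrank ℝ E - 2) * √(∫ y, ‖F y‖ ^ 2 ∂μ) * √(∫ y, ‖fderiv ℝ F y‖ ^ 2 ∂μ) := by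
  have hd' : (3 : ℝ) ≤ finrank ℝ E := by exact_mod_cast hd
  obtain ⟨hint, hle⟩ := hardy_inequality (μ := μ) hd hF hFc x
  have hmeas : AEStronglyMeasurable (fun y => ‖F y‖ / ‖x - y‖) μ :=
    (hF.continuous.norm.measurable.div (by fun_prop)).aestronglyMeasurable
  have hCS := integral_mul_le_sqrt_mul_sqrt (μ := μ) (fun y => norm_nonneg (F y))
    (fun y => div_nonneg (norm_nonneg (F y)) (norm_nonneg (x - y)))
    (hF.continuous.norm.memLp_of_hasCompactSupport hFc.norm)
    ((memLp_two_iff_integrable_sq hmeas).2 (by simpa only [div_pow] using hint))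
  simp only [← mul_div_assoc, ← sq, div_pow] at hCS
  refine hCS.trans ?_
  rw [mul_comm (2 / _), mul_assoc]
  gcongr
  calc √(∫ y, ‖F y‖ ^ 2 / ‖x - y‖ ^ 2 ∂μ)
      ≤ √((2 / (finrank ℝ E - 2)) ^ 2 * ∫ y, ‖fderiv ℝ F y‖ ^ 2 ∂μ) := Real.sqrt_le_sqrt hle
    _ = 2 / (finrank ℝ E - 2) * √(∫ y, ‖fderiv ℝ F y‖ ^ 2 ∂μ) := by
      rw [Real.sqrt_mul (sq_nonneg _), Real.sqrt_sq (div_nonneg zero_le_two (by linarith))]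

end Hardy

theorem sqrt_integral_norm_smul_sq_le {α : Type*} [MeasurableSpace α] {μ : Measure α}
    {𝕜 W : Type*} [NormedField 𝕜] [NormedAddCommGroup W] [NormedSpace 𝕜 W] {S : α → 𝕜}
    {Υ : α → W} {c : ℝ} (hc : 0 ≤ c) (hS : ∀ a, ‖S a‖ ≤ c) (hΥ : MemLp Υ 2 μ) :
    √(∫ a, ‖S a • Υ a‖ ^ 2 ∂μ) ≤ c * √(∫ a, ‖Υ a‖ ^ 2 ∂μ) := by
  have hΥ2 : Integrable (fun a => ‖Υ a‖ ^ 2) μ := hΥ.integrable_norm_pow two_ne_zero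
  calc √(∫ a, ‖S a • Υ a‖ ^ 2 ∂μ) ≤ √(∫ a, c ^ 2 * ‖Υ a‖ ^ 2 ∂μ) := by
        refine Real.sqrt_le_sqrt (integral_mono_of_nonneg (Eventually.of_forall fun a => by
          positivity) (hΥ2.const_mul _) (Eventually.of_forall fun a => ?_))
        dsimp only
        rw [norm_smul, mul_pow]
        gcongr
        exact hS a
    _ = c * √(∫ a, ‖Υ a‖ ^ 2 ∂μ) := by
        rw [integral_const_mul, Real.sqrt_mul (sq_nonneg c), Real.sqrt_sq hc]

section EuclideanSpace

variable {E : Type*} [NormedAddCommGroup E] [NormedSpace ℝ E] {𝕜 : Type*} [RCLike 𝕜]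
  {ι : Type*} [Fintype ι]

theorem norm_fderiv_sq_le_sum {Φ : E → EuclideanSpace 𝕜 ι} {y : E}
    (hΦ : DifferentiableAt ℝ Φ y) :
    ‖fderiv ℝ Φ y‖ ^ 2 ≤ ∑ j, ‖fderiv ℝ (fun z => Φ z j) y‖ ^ 2 := by
  have hcomp : ∀ j, fderiv ℝ (fun z => Φ z j) y = (PiLp.proj 2 (fun _ => 𝕜) j).comp
      (fderiv ℝ Φ y) := fun j =>
    ((PiLp.hasFDerivAt_apply (𝕜 := ℝ) 2 (Φ y) j).comp y hΦ.hasFDerivAt).fderiv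
  refine pow_le_pow_left₀ (norm_nonneg _) ?_ 2 |>.trans (Real.sq_sqrt (by positivity)).le
  refine ContinuousLinearMap.opNorm_le_bound _ (Real.sqrt_nonneg _) fun v => ?_
  rw [← Real.sqrt_sq (norm_nonneg (fderiv ℝ Φ y v)), ← Real.sqrt_sq (norm_nonneg v),
    ← Real.sqrt_mul (by positivity)]
  refine Real.sqrt_le_sqrt ?_
  rw [EuclideanSpace.norm_sq_eq, Finset.sum_mul]
  refine Finset.sum_le_sum fun j _ => ?_
  rw [← mul_pow, hcomp j]
  exact pow_le_pow_left₀ (norm_nonneg _)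
    (((PiLp.proj 2 (fun _ => 𝕜) j).comp (fderiv ℝ Φ y)).le_opNorm v) 2

variable [MeasurableSpace E] [OpensMeasurableSpace E] {μ : Measure E}
  [IsFiniteMeasureOnCompacts μ]

theorem integral_norm_fderiv_sq_le_sum {Φ : E → EuclideanSpace 𝕜 ι} (hΦ : ContDiff ℝ 1 Φ)
    (hΦc : HasCompactSupport Φ) :
    ∫ y, ‖fderiv ℝ Φ y‖ ^ 2 ∂μ ≤ ∑ j, ∫ y, ‖fderiv ℝ (fun z => Φ z j) y‖ ^ 2 ∂μ := by
  have hint : ∀ j, Integrable (fun y => ‖fderiv ℝ (fun z => Φ z j) y‖ ^ 2) μ := fun j => by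
    have hj : ContDiff ℝ 1 fun z => Φ z j := (contDiff_piLp (𝕜 := ℝ) 2).1 hΦ j
    have hjc : HasCompactSupport fun z => Φ z j :=
      hΦc.comp_left (g := fun v : EuclideanSpace 𝕜 ι => v j) (by simp)
    have hcs : HasCompactSupport fun y => ‖fderiv ℝ (fun z => Φ z j) y‖ ^ 2 :=
      (hjc.fderiv ℝ).comp_left (g := fun L : E →L[ℝ] 𝕜 => ‖L‖ ^ 2) (by simp)
    exact ((hj.continuous_fderiv one_ne_zero).norm.pow 2).integrable_of_hasCompactSupport hcs
  rw [← integral_finsetSum _ fun j _ => hint j]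
  exact integral_mono_of_nonneg (Eventually.of_forall fun y => by positivity)
    (integrable_finsetSum _ fun j _ => hint j)
    (Eventually.of_forall fun y => norm_fderiv_sq_le_sum ((hΦ.differentiable one_ne_zero) y))

end EuclideanSpace

theorem hartree_product_L2_bound_general
    (Ω : Set (EuclideanSpace ℝ (Fin 3)))
    (N : ℕ) :
    ∃ C > (0 : ℝ), ∀ Φ : EuclideanSpace ℝ (Fin 3) → EuclideanSpace ℂ (Fin N),
      ContDiff ℝ 1 Φ → HasCompactSupport Φ → tsupport Φ ⊆ Ω →
      ∀ Υ : EuclideanSpace ℝ (Fin 3) → EuclideanSpace ℂ (Fin N),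
        MemLp Υ 2 (volume.restrict Ω) →
        Real.sqrt (∫ x in Ω,
            ‖(∫ y, (∑ j, ‖Φ y j‖ ^ 2) / ‖x - y‖ ∂volume) • Υ x‖ ^ 2 ∂volume)
          ≤ C * Real.sqrt (∫ x, ∑ j, ‖Φ x j‖ ^ 2 ∂volume)
              * Real.sqrt (∑ j, ∫ x, ‖fderiv ℝ (fun z => Φ z j) x‖ ^ 2 ∂volume)
              * Real.sqrt (∫ x in Ω, ‖Υ x‖ ^ 2 ∂volume) := by
  refine ⟨2, two_pos, fun Φ hΦ hΦc _ Υ hΥ => ?_⟩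
  have hd : finrank ℝ (EuclideanSpace ℝ (Fin 3)) = 3 := finrank_euclideanSpace_fin
  have hρ : ∀ y, ∑ j, ‖Φ y j‖ ^ 2 = ‖Φ y‖ ^ 2 := fun y => (EuclideanSpace.norm_sq_eq _).symm
  have hpot : ∀ x, ‖∫ y, (∑ j, ‖Φ y j‖ ^ 2) / ‖x - y‖‖ ≤
      2 * √(∫ x, ∑ j, ‖Φ x j‖ ^ 2) * √(∑ j, ∫ x, ‖fderiv ℝ (fun z => Φ z j) x‖ ^ 2) := by
    intro x
    simp only [hρ]
    rw [Real.norm_of_nonneg (integral_nonneg fun y => by positivity)]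
    calc _ ≤ 2 / (3 - 2) * √(∫ y, ‖Φ y‖ ^ 2) * √(∫ y, ‖fderiv ℝ Φ y‖ ^ 2) := by
          simpa only [hd, Nat.cast_ofNat] using
            integral_norm_sq_div_norm_sub_le (μ := volume) hd.ge hΦ hΦc x
      _ ≤ _ := by
          norm_num only
          gcongr
          exact integral_norm_fderiv_sq_le_sum hΦ hΦc
  calc _ ≤ _ := sqrt_integral_norm_smul_sq_le (by positivity) hpot hΥ
    _ = _ := by ring

/-- For a bounded open set `Ω ⊆ ℝ³` there is `C > 0`, depending only on `N`, such that for
every `C¹` function `Φ : ℝ³ → ℂᴺ` with compact support contained in `Ω` and every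
`Υ ∈ L²(Ω; ℂᴺ)`:
`‖(ρ(Φ) ⋆ w) Υ‖_{L²(Ω)} ≤ C ‖Φ‖_{L²} ‖∇Φ‖_{L²} ‖Υ‖_{L²(Ω)}`,
where `ρ(Φ) = Σⱼ |φⱼ|²`, `w(x) = 1/‖x‖` and `(ρ(Φ) ⋆ w)(x) = ∫_{ℝ³} ρ(Φ)(y)/‖x−y‖ dy`. -/
theorem hartree_product_L2_bound
    (Ω : Set (EuclideanSpace ℝ (Fin 3)))
    (hΩo : IsOpen Ω) (hΩb : Bornology.IsBounded Ω)
    (N : ℕ) (hN : 1 ≤ N) :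
    ∃ C > (0 : ℝ), ∀ Φ : EuclideanSpace ℝ (Fin 3) → EuclideanSpace ℂ (Fin N),
      ContDiff ℝ 1 Φ → HasCompactSupport Φ → tsupport Φ ⊆ Ω →
      ∀ Υ : EuclideanSpace ℝ (Fin 3) → EuclideanSpace ℂ (Fin N),
        MemLp Υ 2 (volume.restrict Ω) →
        Real.sqrt (∫ x in Ω,
            ‖(∫ y, (∑ j, ‖Φ y j‖ ^ 2) / ‖x - y‖ ∂volume) • Υ x‖ ^ 2 ∂volume)
          ≤ C * Real.sqrt (∫ x, ∑ j, ‖Φ x j‖ ^ 2 ∂volume)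
              * Real.sqrt (∑ j, ∫ x, ‖fderiv ℝ (fun z => Φ z j) x‖ ^ 2 ∂volume)
              * Real.sqrt (∫ x in Ω, ‖Υ x‖ ^ 2 ∂volume) :=
  hartree_product_L2_bound_general Ω N
end
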